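/- Let A ⊂ B ⊂ Q_1 be Lebesgue measurable sets, let δ₁, δ₂ ∈ (0,1) and L ∈ ℕ. Suppose: (1) |A| ≤ δ₁; (2) whenever Q ∈ 𝒟_ℓ for some ℓ ≤ L satisfies |A ∩ Q| > δ₁|Q|, then pre(Q) ⊂ B; (3) whenever Q ∈ 𝒟_L satisfies |A ∩ Q| > δ₂|Q|, then Q ⊂ B. Then |A| ≤ δ₁|B| + δ₂. -/

import Mathlib

/-!
Call a dyadic cube `Q` of generation `ℓ ≤ L` light if `|A ∩ Q| ≤ δ₁|Q|`. By downward induction on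
`ℓ`, every light cube satisfies `|A ∩ Q| ≤ δ₁|B ∩ Q| + δ₂|Q|`: in generation `L`, either `Q ⊆ B` or
`|A ∩ Q| ≤ δ₂|Q|` by (3); below `L`, either some child of `Q` is heavy, and then `Q ⊆ B` by (2), or
all children are light and the estimate adds up over them, since the children tile `Q` up to a
null set. Hypothesis (1) says that `Q_1` is light.
-/

open MeasureTheory

/-- The open dyadic subcube of the unit cube `Q_1 = (−1/2, 1/2)^N` of generation `ℓ`
with index `k : Fin N → ℕ` (where `k i < 2^ℓ`): in coordinate `i` it is the interval
`(−1/2 + k i·2^{−ℓ}, −1/2 + (k i + 1)·2^{−ℓ})`.  For `ℓ = 0`, `k = 0`, this is `Q_1`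
itself; the dyadic predecessor of the cube with index `(ℓ, k)` is the cube with index
`(ℓ − 1, fun i => k i / 2)`. -/
def dyadicCube {N : ℕ} (ℓ : ℕ) (k : Fin N → ℕ) : Set (EuclideanSpace ℝ (Fin N)) :=
  {y | ∀ i, -(1 / 2) + (k i : ℝ) / 2 ^ ℓ < y i ∧ y i < -(1 / 2) + ((k i : ℝ) + 1) / 2 ^ ℓ}

open Set ENNReal

variable {N : ℕ}

lemma dyadicCube_eq_preimage_pi (ℓ : ℕ) (k : Fin N → ℕ) :
    dyadicCube ℓ k = (MeasurableEquiv.toLp 2 (Fin N → ℝ)).symm ⁻¹'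
      univ.pi fun i => Ioo (-(1 / 2) + (k i : ℝ) / 2 ^ ℓ) (-(1 / 2) + ((k i : ℝ) + 1) / 2 ^ ℓ) := by
  ext y
  simp [dyadicCube, MeasurableEquiv.coe_toLp_symm]

lemma measurableSet_dyadicCube (ℓ : ℕ) (k : Fin N → ℕ) : MeasurableSet (dyadicCube ℓ k) := by
  rw [dyadicCube_eq_preimage_pi]
  exact (MeasurableEquiv.toLp 2 _).symm.measurable (.univ_pi fun _ => measurableSet_Ioo)

lemma volume_dyadicCube (ℓ : ℕ) (k : Fin N → ℕ) :
    volume (dyadicCube ℓ k) = 2⁻¹ ^ (ℓ * N) := by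
  rw [dyadicCube_eq_preimage_pi,
    (EuclideanSpace.volume_preserving_symm_measurableEquiv_toLp _).measure_preimage
      (MeasurableSet.univ_pi fun _ => measurableSet_Ioo).nullMeasurableSet, volume_pi_pi]
  have h (a : ℝ) : ENNReal.ofReal ((a + 1) / 2 ^ ℓ - a / 2 ^ ℓ) = 2⁻¹ ^ ℓ := by
    rw [← sub_div, add_sub_cancel_left, one_div, ← inv_pow, ofReal_pow (by norm_num),
      ofReal_inv_of_pos two_pos, ofReal_ofNat]
  simp [Real.volume_Ioo, h, pow_mul]

lemma dyadicCube_index_eq_of_mem {ℓ : ℕ} {k k' : Fin N → ℕ} {y : EuclideanSpace ℝ (Fin N)}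
    (h : y ∈ dyadicCube ℓ k) (h' : y ∈ dyadicCube ℓ k') : k = k' := by
  have hlt {k k' : Fin N → ℕ} (i : Fin N) (h : y ∈ dyadicCube ℓ k) (h' : y ∈ dyadicCube ℓ k') :
      ¬ k i < k' i := fun hlt => by
    have : ((k i : ℝ) + 1) / 2 ^ ℓ ≤ (k' i : ℝ) / 2 ^ ℓ := by gcongr; exact_mod_cast hlt
    linarith [(h i).2, (h' i).1]
  funext i
  exact le_antisymm (not_lt.1 (hlt i h' h)) (not_lt.1 (hlt i h h'))

lemma pairwiseDisjoint_dyadicCube (ℓ : ℕ) (s : Set (Fin N → ℕ)) :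
    s.PairwiseDisjoint (dyadicCube ℓ) := fun _ _ _ _ hne =>
  disjoint_left.2 fun _ h h' => hne (dyadicCube_index_eq_of_mem h h')

lemma dyadicCube_succ_subset (ℓ : ℕ) (k : Fin N → ℕ) :
    dyadicCube (ℓ + 1) k ⊆ dyadicCube ℓ (fun i => k i / 2) := by
  intro y hy i
  have hlo : ((k i / 2 : ℕ) : ℝ) * 2 ≤ k i := by exact_mod_cast Nat.div_mul_le_self (k i) 2
  have hhi : (k i : ℝ) + 1 ≤ ((k i / 2 : ℕ) + 1) * 2 := by exact_mod_cast (by omega)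
  have htwo : (0 : ℝ) < 2 := two_pos
  constructor
  · refine lt_of_le_of_lt ?_ (hy i).1
    rw [pow_succ, ← div_div, add_le_add_iff_left, le_div_iff₀ htwo, div_mul_eq_mul_div]
    gcongr
  · refine (hy i).2.trans_le ?_
    rw [pow_succ, ← div_div, add_le_add_iff_left, div_le_iff₀ htwo, div_mul_eq_mul_div]
    gcongr

def dyadicChildren (k : Fin N → ℕ) : Finset (Fin N → ℕ) :=
  Fintype.piFinset fun i => {2 * k i, 2 * k i + 1}

lemma mem_dyadicChildren {k k' : Fin N → ℕ} :
    k' ∈ dyadicChildren k ↔ ∀ i, k' i / 2 = k i := by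
  simp only [dyadicChildren, Fintype.mem_piFinset, Finset.mem_insert, Finset.mem_singleton]
  exact forall_congr' fun i => by omega

lemma card_dyadicChildren (k : Fin N → ℕ) : (dyadicChildren k).card = 2 ^ N := by
  simp [dyadicChildren, Fintype.card_piFinset]

lemma biUnion_dyadicChildren_subset (ℓ : ℕ) (k : Fin N → ℕ) :
    ⋃ k' ∈ dyadicChildren k, dyadicCube (ℓ + 1) k' ⊆ dyadicCube ℓ k :=
  iUnion₂_subset fun k' hk' => by
    simpa [funext (mem_dyadicChildren.1 hk')] using dyadicCube_succ_subset ℓ k'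

lemma volume_biUnion_dyadicChildren (ℓ : ℕ) (k : Fin N → ℕ) :
    volume (⋃ k' ∈ dyadicChildren k, dyadicCube (ℓ + 1) k') = volume (dyadicCube ℓ k) := by
  rw [measure_biUnion_finset (pairwiseDisjoint_dyadicCube _ _)
    fun _ _ => measurableSet_dyadicCube _ _]
  simp only [volume_dyadicCube, Finset.sum_const, card_dyadicChildren, nsmul_eq_mul]
  rw [add_mul, one_mul, pow_add, Nat.cast_pow, Nat.cast_ofNat, mul_left_comm,
    ← mul_pow, ENNReal.mul_inv_cancel two_ne_zero ofNat_ne_top, one_pow, mul_one]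

lemma biUnion_dyadicChildren_ae_eq (ℓ : ℕ) (k : Fin N → ℕ) :
    ⋃ k' ∈ dyadicChildren k, dyadicCube (ℓ + 1) k' =ᵐ[volume] dyadicCube ℓ k :=
  ae_eq_of_subset_of_measure_ge (biUnion_dyadicChildren_subset ℓ k)
    (volume_biUnion_dyadicChildren ℓ k).ge
    (Finset.measurableSet_biUnion _ fun _ _ => measurableSet_dyadicCube _ _).nullMeasurableSet
    (by simp [volume_dyadicCube])

lemma volume_inter_dyadicCube_eq_sum (S : Set (EuclideanSpace ℝ (Fin N))) (ℓ : ℕ)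
    (k : Fin N → ℕ) :
    volume (S ∩ dyadicCube ℓ k) =
      ∑ k' ∈ dyadicChildren k, volume (S ∩ dyadicCube (ℓ + 1) k') := by
  rw [← Measure.restrict_apply' (measurableSet_dyadicCube ℓ k),
    ← Measure.restrict_congr_set (biUnion_dyadicChildren_ae_eq ℓ k),
    Measure.restrict_biUnion_finset (pairwiseDisjoint_dyadicCube _ _)
      fun _ => measurableSet_dyadicCube _ _, Measure.sum_apply_of_countable,
    Finset.tsum_subtype (dyadicChildren k) fun k' => volume.restrict (dyadicCube (ℓ + 1) k') S]
  simp only [Measure.restrict_apply' (measurableSet_dyadicCube _ _)]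

lemma dyadicChildren_lt_two_pow {ℓ : ℕ} {k k' : Fin N → ℕ} (hk : ∀ i, k i < 2 ^ ℓ)
    (hk' : k' ∈ dyadicChildren k) (i : Fin N) : k' i < 2 ^ (ℓ + 1) := by
  rw [pow_succ, ← Nat.div_lt_iff_lt_mul two_pos, mem_dyadicChildren.1 hk' i]
  exact hk i

section Light

variable {A B : Set (EuclideanSpace ℝ (Fin N))} {c₁ c₂ : ℝ≥0∞}

lemma volume_inter_dyadicCube_le_of_dyadicChildren {ℓ : ℕ} {k : Fin N → ℕ}
    (h : ∀ k' ∈ dyadicChildren k, volume (A ∩ dyadicCube (ℓ + 1) k') ≤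
      c₁ * volume (B ∩ dyadicCube (ℓ + 1) k') + c₂ * volume (dyadicCube (ℓ + 1) k')) :
    volume (A ∩ dyadicCube ℓ k) ≤
      c₁ * volume (B ∩ dyadicCube ℓ k) + c₂ * volume (dyadicCube ℓ k) := by
  have hQ := volume_inter_dyadicCube_eq_sum univ ℓ k
  simp only [univ_inter] at hQ
  rw [volume_inter_dyadicCube_eq_sum A, volume_inter_dyadicCube_eq_sum B, hQ, Finset.mul_sum,
    Finset.mul_sum, ← Finset.sum_add_distrib]
  exact Finset.sum_le_sum h

theorem volume_inter_dyadicCube_le_of_density_le {L : ℕ}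
    (hpre : ∀ ℓ : ℕ, 1 ≤ ℓ → ℓ ≤ L → ∀ k : Fin N → ℕ, (∀ i, k i < 2 ^ ℓ) →
      c₁ * volume (dyadicCube ℓ k) < volume (A ∩ dyadicCube ℓ k) →
      dyadicCube (ℓ - 1) (fun i => k i / 2) ⊆ B)
    (hlast : ∀ k : Fin N → ℕ, (∀ i, k i < 2 ^ L) →
      c₂ * volume (dyadicCube L k) < volume (A ∩ dyadicCube L k) → dyadicCube L k ⊆ B)
    {ℓ : ℕ} (hℓ : ℓ ≤ L) {k : Fin N → ℕ} (hk : ∀ i, k i < 2 ^ ℓ)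
    (hlight : volume (A ∩ dyadicCube ℓ k) ≤ c₁ * volume (dyadicCube ℓ k)) :
    volume (A ∩ dyadicCube ℓ k) ≤
      c₁ * volume (B ∩ dyadicCube ℓ k) + c₂ * volume (dyadicCube ℓ k) := by
  have of_subset {ℓ : ℕ} {k : Fin N → ℕ} (hB : dyadicCube ℓ k ⊆ B)
      (hlight : volume (A ∩ dyadicCube ℓ k) ≤ c₁ * volume (dyadicCube ℓ k)) :
      volume (A ∩ dyadicCube ℓ k) ≤
        c₁ * volume (B ∩ dyadicCube ℓ k) + c₂ * volume (dyadicCube ℓ k) := by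
    rw [inter_eq_right.2 hB]
    exact le_add_right hlight
  induction hℓ using Nat.decreasingInduction generalizing k with
  | self =>
    by_cases hB : dyadicCube L k ⊆ B
    · exact of_subset hB hlight
    · exact le_add_left (not_lt.1 (mt (hlast k hk) hB))
  | of_succ ℓ hℓL ih =>
    by_cases hheavy : ∃ k' ∈ dyadicChildren k,
        c₁ * volume (dyadicCube (ℓ + 1) k') < volume (A ∩ dyadicCube (ℓ + 1) k')
    · obtain ⟨k', hk', hheavy⟩ := hheavy
      refine of_subset ?_ hlight
      simpa [funext (mem_dyadicChildren.1 hk')] using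
        hpre (ℓ + 1) le_add_self hℓL k' (dyadicChildren_lt_two_pow hk hk') hheavy
    · push Not at hheavy
      exact volume_inter_dyadicCube_le_of_dyadicChildren fun k' hk' =>
        ih (dyadicChildren_lt_two_pow hk hk') (hheavy k' hk')

end Light

theorem calderon_zygmund_general (N : ℕ)
    (A B : Set (EuclideanSpace ℝ (Fin N)))
    (hAB : A ⊆ B) (hBQ : B ⊆ dyadicCube 0 (fun _ => 0))
    (δ₁ δ₂ : ℝ) (L : ℕ)
    (h1 : volume A ≤ ENNReal.ofReal δ₁)
    (h2 : ∀ ℓ : ℕ, 1 ≤ ℓ → ℓ ≤ L → ∀ k : Fin N → ℕ, (∀ i, k i < 2 ^ ℓ) →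
      ENNReal.ofReal δ₁ * volume (dyadicCube ℓ k) < volume (A ∩ dyadicCube ℓ k) →
      dyadicCube (ℓ - 1) (fun i => k i / 2) ⊆ B)
    (h3 : ∀ k : Fin N → ℕ, (∀ i, k i < 2 ^ L) →
      ENNReal.ofReal δ₂ * volume (dyadicCube L k) < volume (A ∩ dyadicCube L k) →
      dyadicCube L k ⊆ B) :
    volume A ≤ ENNReal.ofReal δ₁ * volume B + ENNReal.ofReal δ₂ := by
  have hQ₁ : volume (dyadicCube 0 (fun _ : Fin N => 0)) = 1 := by simp [volume_dyadicCube]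
  have hA : A ∩ dyadicCube 0 (fun _ => 0) = A := inter_eq_left.2 (hAB.trans hBQ)
  have key := volume_inter_dyadicCube_le_of_density_le h2 h3 (Nat.zero_le L)
    (k := fun _ => 0) (fun _ => Nat.one_pos) (by rwa [hA, hQ₁, mul_one])
  rw [hA, hQ₁, mul_one] at key
  exact key.trans (by gcongr; exact inter_subset_left)

/-- **Calderón–Zygmund decomposition.** Let `A ⊆ B ⊆ Q_1` be measurable,
`δ₁, δ₂ ∈ (0,1)` and `L ∈ ℕ`. Suppose: (1) `|A| ≤ δ₁`; (2) whenever a dyadic cube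
`Q ∈ 𝒟_ℓ` with `ℓ ≤ L` satisfies `|A ∩ Q| > δ₁|Q|`, then `pre(Q) ⊆ B`; (3) whenever
`Q ∈ 𝒟_L` satisfies `|A ∩ Q| > δ₂|Q|`, then `Q ⊆ B`. Then `|A| ≤ δ₁|B| + δ₂`. -/
theorem calderon_zygmund (N : ℕ) (hN : 1 ≤ N)
    (A B : Set (EuclideanSpace ℝ (Fin N)))
    (hAB : A ⊆ B) (hBQ : B ⊆ dyadicCube 0 (fun _ => 0))
    (hAmeas : MeasurableSet A) (hBmeas : MeasurableSet B)
    (δ₁ δ₂ : ℝ) (hδ₁ : δ₁ ∈ Set.Ioo (0 : ℝ) 1) (hδ₂ : δ₂ ∈ Set.Ioo (0 : ℝ) 1) (L : ℕ)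
    (h1 : volume A ≤ ENNReal.ofReal δ₁)
    (h2 : ∀ ℓ : ℕ, 1 ≤ ℓ → ℓ ≤ L → ∀ k : Fin N → ℕ, (∀ i, k i < 2 ^ ℓ) →
      ENNReal.ofReal δ₁ * volume (dyadicCube ℓ k) < volume (A ∩ dyadicCube ℓ k) →
      dyadicCube (ℓ - 1) (fun i => k i / 2) ⊆ B)
    (h3 : ∀ k : Fin N → ℕ, (∀ i, k i < 2 ^ L) →
      ENNReal.ofReal δ₂ * volume (dyadicCube L k) < volume (A ∩ dyadicCube L k) →
      dyadicCube L k ⊆ B) :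
    volume A ≤ ENNReal.ofReal δ₁ * volume B + ENNReal.ofReal δ₂ :=
  calderon_zygmund_general N A B hAB hBQ δ₁ δ₂ L h1 h2 h3
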